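/- Every element of finite order n in the group G of formal power series under composition is conjugate in G to its linear term ℓ_ω(z) = ωz, where ω is the linear coefficient of f. -/

import Mathlib

open PowerSeries

/-- Composition (substitution) of formal power series: coefficient formula,
valid for `g` with zero constant term. -/
noncomputable def PS.comp {F : Type*} [CommRing F] (f g : PowerSeries F) : PowerSeries F :=
  PowerSeries.mk fun k =>
    ∑ n ∈ Finset.range (k + 1), (PowerSeries.coeff n f) * (PowerSeries.coeff k (g ^ n))

/-- The group `G` of series with zero constant term and nonzero linear coefficient. -/
def PS.G (F : Type*) [CommRing F] : Set (PowerSeries F) :=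
  {f | PowerSeries.constantCoeff f = 0 ∧ PowerSeries.coeff 1 f ≠ 0}

/-- `n`-fold compositional iterate of `f`. -/
noncomputable def PS.iter {F : Type*} [CommRing F] (f : PowerSeries F) : ℕ → PowerSeries F
  | 0 => PowerSeries.X
  | n + 1 => PS.comp f (PS.iter f n)

/-- `f` has compositional order exactly `n`. -/
def PS.HasOrder {F : Type*} [CommRing F] (f : PowerSeries F) (n : ℕ) : Prop :=
  PS.iter f n = PowerSeries.X ∧ ∀ m, 0 < m → m < n → PS.iter f m ≠ PowerSeries.X

/-!
Write `ω = f'(0)`. Since `f^{∘n} = id` forces `ωⁿ = 1`, the average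
`g = (1/n) ∑_{k<n} ω^{-k} f^{∘k}` satisfies `g ∘ f = ω g`: composing with `f` shifts the
summands cyclically. As `g'(0) = 1`, `g` is invertible for composition, and
`g ∘ f ∘ g⁻¹ = ω z`.
-/

theorem Finset.sum_range_add_one_eq_sum_range {M : Type*} [AddCommMonoid M] {T : ℕ → M}
    {n : ℕ} (h : T n = T 0) : ∑ k ∈ range n, T (k + 1) = ∑ k ∈ range n, T k := by
  cases n with
  | zero => simp
  | succ m => rw [sum_range_succ, h, sum_range_succ' T]

namespace PS

section CommRing

variable {R : Type*} [CommRing R]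

/-- The coefficient formula `PS.comp` is Mathlib's substitution, whose ring-hom property,
associativity and compositional inverses carry the rest of the argument. -/
theorem comp_eq_subst (f : R⟦X⟧) {g : R⟦X⟧} (hg : constantCoeff g = 0) :
    PS.comp f g = f.subst g := by
  ext k
  rw [PS.comp, coeff_mk, coeff_subst' (HasSubst.of_constantCoeff_zero' hg)]
  refine (finsum_eq_sum_of_support_subset _ fun d hd => ?_).symm
  rw [Finset.coe_range, Set.mem_Iio, Nat.lt_succ_iff]
  by_contra! hkd
  have : coeff k (g ^ d) = 0 := coeff_of_lt_order k <|
    (le_order_pow_of_constantCoeff_eq_zero d hg).trans_lt' (by exact_mod_cast hkd)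
  exact hd (by simp [this])

theorem coeff_one_subst (f : R⟦X⟧) {g : R⟦X⟧} (hg : constantCoeff g = 0) :
    coeff 1 (f.subst g) = coeff 1 f * coeff 1 g := by
  simp [← comp_eq_subst f hg, PS.comp, Finset.sum_range_succ]

variable {f : R⟦X⟧}

theorem constantCoeff_iter (hf : constantCoeff f = 0) (k : ℕ) :
    constantCoeff (PS.iter f k) = 0 := by
  induction k with
  | zero => simp [PS.iter]
  | succ k ih => rw [PS.iter, comp_eq_subst f ih]; exact constantCoeff_subst_eq_zero ih f hf

theorem iter_succ (hf : constantCoeff f = 0) (k : ℕ) :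
    PS.iter f (k + 1) = f.subst (PS.iter f k) :=
  comp_eq_subst f (constantCoeff_iter hf k)

theorem iter_succ' (hf : constantCoeff f = 0) (k : ℕ) :
    PS.iter f (k + 1) = (PS.iter f k).subst f := by
  have hf' : HasSubst f := HasSubst.of_constantCoeff_zero' hf
  induction k with
  | zero => rw [iter_succ hf, PS.iter, X_subst, subst_X hf']
  | succ k ih =>
    calc PS.iter f (k + 2) = f.subst ((PS.iter f k).subst f) := by rw [iter_succ hf (k + 1), ih]
      _ = PowerSeries.subst f (f.subst (PS.iter f k)) := by
        rw [← subst_comp_subst_apply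
          (HasSubst.of_constantCoeff_zero' (constantCoeff_iter hf k)) hf']
      _ = (PS.iter f (k + 1)).subst f := by rw [iter_succ hf]

theorem coeff_one_iter (hf : constantCoeff f = 0) (k : ℕ) :
    coeff 1 (PS.iter f k) = coeff 1 f ^ k := by
  induction k with
  | zero => simp [PS.iter]
  | succ k ih => rw [iter_succ hf, coeff_one_subst f (constantCoeff_iter hf k), ih, pow_succ']

end CommRing

section Field

variable {F : Type*} [Field F]

noncomputable def linearizer (f : F⟦X⟧) (n : ℕ) : F⟦X⟧ :=
  (n : F)⁻¹ • ∑ k ∈ Finset.range n, (coeff 1 f)⁻¹ ^ k • PS.iter f k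

variable {f : F⟦X⟧} {n : ℕ}

theorem constantCoeff_linearizer (hf : constantCoeff f = 0) :
    constantCoeff (linearizer f n) = 0 := by
  simp [linearizer, constantCoeff_iter hf]

theorem coeff_one_iter_self (hf : constantCoeff f = 0) (hfn : PS.iter f n = X) :
    coeff 1 f ^ n = 1 := by
  simpa [hfn] using (coeff_one_iter hf n).symm

theorem coeff_one_ne_zero_of_iter_eq_X (hf : constantCoeff f = 0) (hfn : PS.iter f n = X)
    (hn : n ≠ 0) : coeff 1 f ≠ 0 :=
  ne_zero_pow hn (by rw [coeff_one_iter_self hf hfn]; exact one_ne_zero)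

theorem coeff_one_linearizer (hf : constantCoeff f = 0) (hfn : PS.iter f n = X)
    (hn : (n : F) ≠ 0) : coeff 1 (linearizer f n) = 1 := by
  have hω := coeff_one_ne_zero_of_iter_eq_X hf hfn (by rintro rfl; exact hn Nat.cast_zero)
  simp [linearizer, coeff_one_iter hf, hω, hn]

theorem subst_linearizer (hf : constantCoeff f = 0) (hfn : PS.iter f n = X) (hn : n ≠ 0) :
    (linearizer f n).subst f = coeff 1 f • linearizer f n := by
  have hf' : HasSubst f := HasSubst.of_constantCoeff_zero' hf
  set ω := coeff 1 f
  have hωn : ω ^ n = 1 := coeff_one_iter_self hf hfn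
  have hω : ω ≠ 0 := coeff_one_ne_zero_of_iter_eq_X hf hfn hn
  have hshift : ∑ k ∈ Finset.range n, ω⁻¹ ^ k • PS.iter f (k + 1) =
      ω • ∑ k ∈ Finset.range n, ω⁻¹ ^ k • PS.iter f k := by
    rw [← Finset.sum_range_add_one_eq_sum_range (T := fun k => ω⁻¹ ^ k • PS.iter f k)
      (by simp [hfn, inv_pow, hωn, PS.iter]), Finset.smul_sum]
    refine Finset.sum_congr rfl fun k _ => ?_
    rw [smul_smul, pow_succ', ← mul_assoc, mul_inv_cancel₀ hω, one_mul]
  rw [linearizer, subst_smul hf', ← coe_substAlgHom hf', map_sum]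
  simp only [map_smul, coe_substAlgHom, ← iter_succ' hf]
  rw [hshift, smul_comm]

end Field

end PS

theorem stmt_6 (F : Type*) [Field F] [CharZero F] (f : PowerSeries F) (hf : f ∈ PS.G F)
    (n : ℕ) (hn : 0 < n) (hord : PS.HasOrder f n) :
    ∃ g ∈ PS.G F, ∃ ginv ∈ PS.G F,
      PS.comp g ginv = PowerSeries.X ∧ PS.comp ginv g = PowerSeries.X ∧
      PS.comp (PS.comp g f) ginv =
        PowerSeries.C (PowerSeries.coeff 1 f) * PowerSeries.X := by
  obtain ⟨hf0, -⟩ := hf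
  set g := PS.linearizer f n
  have hg0 : constantCoeff g = 0 := PS.constantCoeff_linearizer hf0
  have hg1 : IsUnit (coeff 1 g) := by
    rw [PS.coeff_one_linearizer hf0 hord.1 (Nat.cast_ne_zero.mpr hn.ne')]
    exact isUnit_one
  set ginv := g.substInvOfIsUnit hg1
  have hginv0 : constantCoeff ginv = 0 := constantCoeff_substInvOfIsUnit g hg1
  have hg_ginv : g.subst ginv = X := subst_substInvOfIsUnit_right g hg0 hg1
  refine ⟨g, ⟨hg0, hg1.ne_zero⟩, ginv, ⟨hginv0, ?_⟩, ?_, ?_, ?_⟩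
  · rw [coeff_one_substInvOfIsUnit]
    exact Units.ne_zero _
  · rw [PS.comp_eq_subst g hginv0, hg_ginv]
  · rw [PS.comp_eq_subst ginv hg0, subst_substInvOfIsUnit_left g hg0 hg1]
  · rw [PS.comp_eq_subst g hf0, PS.subst_linearizer hf0 hord.1 hn.ne', PS.comp_eq_subst _ hginv0,
      subst_smul (HasSubst.of_constantCoeff_zero' hginv0), hg_ginv, smul_eq_C_mul]
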